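/- arXiv:2206.09586 — 2 statements merged into one kernel-verified Lean document; each statement's English description precedes it below -/
import Mathlib

section
/- Let n ≥ 1 and let d : ZMod n → ℤ be a function with ∑ j, d j = 0 and |d j| ≤ M for all j. Then there exists a cyclic shift of the indices such that the partial sums S_j = ∑_{k=1}^{j} d k (for 0 ≤ j ≤ n) satisfy 0 ≤ S_j ≤ (n * M) / 2 for all j (in particular the minimum partial sum is 0 and the maximum is at most nM/2). -/
/-!
Let `S_c(j)` be the `j`-th partial sum of `d` read cyclically from `c + 1`. Since `d` sums to
zero, `j ↦ S_0(j)` is `n`-periodic, so starting right after a point `m` where it is minimal makes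
every partial sum `S_m(j) = S_0(m + j) - S_0(m)` nonnegative. For the upper bound, the first `j`
terms contribute at most `j M`, while the remaining `n - j` terms, which cancel them, contribute at
least `-(n - j) M`; hence `2 S_m(j) ≤ n M`.
-/

open Finset

namespace ZMod

variable {n : ℕ} {α : Type*}

theorem sum_range_natCast_eq_sum [NeZero n] [AddCommMonoid α] (f : ZMod n → α) :
    ∑ k ∈ range n, f k = ∑ x, f x :=
  sum_nbij' (fun k => (k : ZMod n)) val (fun _ _ => mem_univ _)
    (fun x _ => mem_range.mpr x.val_lt) (fun _ hk => val_cast_of_lt (mem_range.mp hk))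
    (fun x _ => natCast_zmod_val x) (fun _ _ => rfl)

/-- `cyclicPartialSum d c j = d (c + 1) + ⋯ + d (c + j)`. -/
def cyclicPartialSum [AddCommMonoid α] (d : ZMod n → α) (c : ZMod n) (j : ℕ) : α :=
  ∑ k ∈ range j, d (c + (k + 1 : ℕ))

section AddCommMonoid

variable [AddCommMonoid α] (d : ZMod n → α)

theorem cyclicPartialSum_add (c : ZMod n) (a b : ℕ) :
    cyclicPartialSum d c (a + b) = cyclicPartialSum d c a + cyclicPartialSum d (c + a) b := by
  simp only [cyclicPartialSum, sum_range_add, Nat.cast_add, add_assoc]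

theorem cyclicPartialSum_self [NeZero n] (c : ZMod n) : cyclicPartialSum d c n = ∑ x, d x := by
  calc cyclicPartialSum d c n = ∑ k ∈ range n, d (c + 1 + k) := by
        refine sum_congr rfl fun k _ => ?_
        rw [Nat.cast_succ, add_comm (k : ZMod n), add_assoc]
    _ = ∑ x, d (c + 1 + x) := sum_range_natCast_eq_sum fun x => d (c + 1 + x)
    _ = ∑ x, d x := Equiv.sum_comp (Equiv.addLeft (c + 1)) d

theorem cyclicPartialSum_periodic [NeZero n] (hsum : ∑ x, d x = 0) (c : ZMod n) :
    Function.Periodic (cyclicPartialSum d c) n := fun j => by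
  rw [add_comm, cyclicPartialSum_add, cyclicPartialSum_self, hsum, natCast_self, add_zero,
    zero_add]

theorem cyclicPartialSum_le_nsmul [PartialOrder α] [IsOrderedAddMonoid α] {M : α}
    (hM : ∀ x, d x ≤ M) (c : ZMod n) (j : ℕ) : cyclicPartialSum d c j ≤ j • M :=
  (sum_le_sum fun _ _ => hM _).trans_eq (by rw [sum_const, card_range])

theorem nsmul_le_cyclicPartialSum [PartialOrder α] [IsOrderedAddMonoid α] {M : α}
    (hM : ∀ x, M ≤ d x) (c : ZMod n) (j : ℕ) : j • M ≤ cyclicPartialSum d c j :=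
  (sum_le_sum fun _ _ => hM _).trans_eq' (by rw [sum_const, card_range])

end AddCommMonoid

section OrderedAddCommGroup

variable [AddCommGroup α] [LinearOrder α] [IsOrderedAddMonoid α] (d : ZMod n → α)

theorem exists_forall_cyclicPartialSum_nonneg [NeZero n] (hsum : ∑ x, d x = 0) :
    ∃ c : ZMod n, ∀ j, 0 ≤ cyclicPartialSum d c j := by
  obtain ⟨m, hm⟩ := Finite.exists_min fun x : ZMod n => cyclicPartialSum d 0 x.val
  have hmin : ∀ i, cyclicPartialSum d 0 m.val ≤ cyclicPartialSum d 0 i := fun i => by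
    rw [← (cyclicPartialSum_periodic d hsum 0).map_mod_nat i, ← val_natCast n i]
    exact hm _
  refine ⟨m, fun j => ?_⟩
  have h := hmin (m.val + j)
  rw [cyclicPartialSum_add, zero_add, natCast_zmod_val] at h
  exact le_add_iff_nonneg_right _ |>.mp h

theorem two_nsmul_cyclicPartialSum_le [NeZero n] (hsum : ∑ x, d x = 0) {M : α}
    (hM : ∀ x, |d x| ≤ M) (c : ZMod n) {j : ℕ} (hj : j ≤ n) :
    2 • cyclicPartialSum d c j ≤ n • M := by
  have hcancel : cyclicPartialSum d c j + cyclicPartialSum d (c + j) (n - j) = 0 := by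
    rw [← cyclicPartialSum_add, Nat.add_sub_cancel' hj, cyclicPartialSum_self, hsum]
  have hfirst := cyclicPartialSum_le_nsmul d (fun x => (abs_le.mp (hM x)).2) c j
  have hrest := nsmul_le_cyclicPartialSum d (fun x => (abs_le.mp (hM x)).1) (c + j) (n - j)
  have hlast : cyclicPartialSum d c j ≤ (n - j) • M := by
    rw [eq_neg_of_add_eq_zero_left hcancel, ← neg_neg ((n - j) • M), ← smul_neg]
    exact neg_le_neg hrest
  calc 2 • cyclicPartialSum d c j ≤ j • M + (n - j) • M := by
        rw [two_nsmul]; exact add_le_add hfirst hlast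
    _ = n • M := by rw [← add_nsmul, Nat.add_sub_cancel' hj]

end OrderedAddCommGroup

end ZMod

/-- Key arithmetic lemma for constructing edge sequences: given `d : ZMod n → ℤ`
with zero total sum and `|d j| ≤ M`, there is a cyclic shift of indices so that
all partial sums lie in `[0, nM/2]`. -/
theorem cyclic_shift_partial_sums (n : ℕ) [NeZero n] (d : ZMod n → ℤ) (M : ℤ)
    (hsum : ∑ j, d j = 0) (hM : ∀ j, |d j| ≤ M) :
    ∃ c : ZMod n, ∀ j ≤ n,
      0 ≤ ∑ k ∈ Finset.range j, d (c + (k + 1 : ℕ)) ∧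
      ((∑ k ∈ Finset.range j, d (c + (k + 1 : ℕ)) : ℤ) : ℚ) ≤ (n * M) / 2 := by
  obtain ⟨c, hc⟩ := ZMod.exists_forall_cyclicPartialSum_nonneg d hsum
  refine ⟨c, fun j hj => ⟨hc j, ?_⟩⟩
  have h := ZMod.two_nsmul_cyclicPartialSum_le d hsum hM c hj
  rw [nsmul_eq_mul, nsmul_eq_mul] at h
  have hq : (2 : ℚ) * ZMod.cyclicPartialSum d c j ≤ n * M := by exact_mod_cast h
  change ((ZMod.cyclicPartialSum d c j : ℤ) : ℚ) ≤ _
  linarith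
end

section
/- Let n ≥ 1 and let s, t : ZMod n → ℤ be functions with ∑ j, s j = ∑ j, t j, |s j - t j| ≤ M for all j, and s j ≥ (n/2)·M + A + 1 and t j ≥ (n/2)·M + A + 1 for all j (where M ≥ 0 and A ≥ 1 are integers, using rational (n/2)·M). Then there exist integers u : ZMod n → ℤ with A ≤ u j ≤ (n/2)·M + A for all j, and s j - t j = u j - u (j-1) for all j. -/
/-- Claim in the proof of Lemma `admissibletoedgeseq`: there exist integers `u j`
with `A ≤ u j ≤ (n/2)·M + A` and `s j - t j = u j - u (j-1)` cyclically. -/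
theorem exists_u_correction (n : ℕ) [NeZero n] (s t : ZMod n → ℤ) (M A : ℤ)
    (hM : 0 ≤ M) (hA : 1 ≤ A)
    (hsum : ∑ j, s j = ∑ j, t j)
    (hdiff : ∀ j, |s j - t j| ≤ M)
    (hs : ∀ j, ((n : ℚ) / 2) * M + A + 1 ≤ (s j : ℚ))
    (ht : ∀ j, ((n : ℚ) / 2) * M + A + 1 ≤ (t j : ℚ)) :
    ∃ u : ZMod n → ℤ, ∀ j, A ≤ u j ∧ ((u j : ℚ) ≤ ((n : ℚ) / 2) * M + A) ∧
      s j - t j = u j - u (j - 1) := by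
  have hn : 0 < n := Nat.pos_of_ne_zero (NeZero.ne n)
  set D : ℕ → ℤ := fun k => s (k : ZMod n) - t (k : ZMod n) with hD
  set S : ℕ → ℤ := fun m => ∑ k ∈ Finset.range m, D k with hS
  have hDper : ∀ k, D (k + n) = D k := by intro k; simp [hD]
  have hDM : ∀ k, |D k| ≤ M := fun k => hdiff _
  have hSn : S n = 0 := by
    have h1 : S n = ∑ j : ZMod n, (s j - t j) := by
      refine Finset.sum_nbij' (fun k => (k : ZMod n)) (fun j => j.val) ?_ ?_ ?_ ?_ ?_
      · intros; exact Finset.mem_univ _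
      · intro j _; exact Finset.mem_range.mpr (ZMod.val_lt j)
      · intro k hk; exact ZMod.val_natCast_of_lt (Finset.mem_range.mp hk)
      · intro j _; exact ZMod.natCast_rightInverse j
      · intros; rfl
    rw [h1, Finset.sum_sub_distrib, hsum, sub_self]
  have hSper : ∀ m, S (m + n) = S m := by
    intro m
    have h2 : S (n + m) = S n + ∑ k ∈ Finset.range m, D (n + k) := by
      simp [hS, Finset.sum_range_add]
    have h3 : ∀ k, D (n + k) = D k := by intro k; rw [Nat.add_comm]; exact hDper k
    rw [Nat.add_comm m n, h2, hSn, zero_add]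
    exact Finset.sum_congr rfl fun k _ => h3 k
  obtain ⟨m0, hm0mem, hm0min⟩ :=
    Finset.exists_min_image (Finset.range n) S ⟨0, Finset.mem_range.mpr hn⟩
  have hmin : ∀ m, S m0 ≤ S m := by
    intro m
    induction m using Nat.strong_induction_on with
    | _ m ih =>
      rcases lt_or_ge m n with h | h
      · exact hm0min m (Finset.mem_range.mpr h)
      · have he : S m = S (m - n) := by
          have := hSper (m - n); rwa [Nat.sub_add_cancel h] at this
        rw [he]; exact ih (m - n) (by omega)
  have habs : ∀ a b : ℕ, a ≤ b → |S b - S a| ≤ ((b - a : ℕ) : ℤ) * M := by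
    intro a b hab
    induction b, hab using Nat.le_induction with
    | base => simp
    | succ b hab ih =>
      have he : S (b + 1) - S a = (S b - S a) + D b := by
        simp [hS, Finset.sum_range_succ]; ring
      have hc : ((b + 1 - a : ℕ) : ℤ) = ((b - a : ℕ) : ℤ) + 1 := by
        have : (b + 1 - a : ℕ) = (b - a) + 1 := by omega
        rw [this]; push_cast; ring
      calc |S (b + 1) - S a| ≤ |S b - S a| + |D b| := by rw [he]; exact abs_add_le _ _
        _ ≤ ((b - a : ℕ) : ℤ) * M + M := add_le_add ih (hDM b)
        _ = ((b + 1 - a : ℕ) : ℤ) * M := by rw [hc]; ring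
  -- key bound
  have key : ∀ m, m0 ≤ m → m ≤ m0 + n → 2 * (S m - S m0) ≤ (n : ℤ) * M := by
    intro m h1 h2
    have b1 : S m - S m0 ≤ ((m - m0 : ℕ) : ℤ) * M :=
      le_trans (le_abs_self _) (habs m0 m h1)
    have b2 : S m - S (m0 + n) ≤ ((m0 + n - m : ℕ) : ℤ) * M := by
      have := habs m (m0 + n) h2
      have := neg_abs_le (S (m0 + n) - S m)
      nlinarith [habs m (m0 + n) h2, neg_abs_le (S (m0 + n) - S m),
        abs_nonneg (S (m0 + n) - S m)]
    rw [hSper m0] at b2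
    have hc : ((m - m0 : ℕ) : ℤ) + ((m0 + n - m : ℕ) : ℤ) = (n : ℤ) := by
      omega
    nlinarith
  refine ⟨fun j => A + (S (m0 + 1 + (j - (m0 : ZMod n)).val) - S m0), fun j => ?_⟩
  have hvalcast : ∀ x : ZMod n, ((x.val : ℕ) : ZMod n) = x := fun x =>
    ZMod.natCast_rightInverse x
  set r : ℕ := (j - (m0 : ZMod n)).val with hr
  have hrlt : r < n := ZMod.val_lt _
  have hub : (↑(A + (S (m0 + 1 + r) - S m0)) : ℚ) ≤ ((n : ℚ) / 2) * M + A := by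
    have h1 : 2 * (S (m0 + 1 + r) - S m0) ≤ (n : ℤ) * M :=
      key _ (by omega) (by omega)
    have h2 : (2 * (S (m0 + 1 + r) - S m0) : ℚ) ≤ (n : ℚ) * M := by exact_mod_cast h1
    push_cast
    linarith
  refine ⟨?_, hub, ?_⟩
  · show A ≤ A + (S (m0 + 1 + r) - S m0)
    have := hmin (m0 + 1 + r); omega
  have hx : ((r : ℕ) : ZMod n) = j - (m0 : ZMod n) := by rw [hr]; exact hvalcast _
  have hcast : ((m0 + r : ℕ) : ZMod n) = j := by push_cast [hx]; ring
  show s j - t j =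
    (A + (S (m0 + 1 + r) - S m0)) - (A + (S (m0 + 1 + (j - 1 - (m0 : ZMod n)).val) - S m0))
  rcases Nat.eq_zero_or_pos r with h0 | hpos
  · -- j = m0
    have hj : j = (m0 : ZMod n) := by
      have h1 : j - (m0 : ZMod n) = 0 := (ZMod.val_eq_zero _).mp (hr ▸ h0)
      linear_combination h1
    have hn1 : ((n - 1 : ℕ) : ZMod n) = -1 := by
      have h4 : (((n - 1 : ℕ) : ZMod n)) + 1 = ((n : ℕ) : ZMod n) := by
        rw [← Nat.cast_add_one, show n - 1 + 1 = n by omega]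
      rw [ZMod.natCast_self] at h4
      exact eq_neg_of_add_eq_zero_left h4
    have hr' : (j - 1 - (m0 : ZMod n)).val = n - 1 := by
      have heq : j - 1 - (m0 : ZMod n) = ((n - 1 : ℕ) : ZMod n) := by
        rw [hj, hn1]; ring
      rw [heq, ZMod.val_natCast_of_lt (by omega)]
    rw [hr', h0, show m0 + 1 + (n - 1) = m0 + n by omega, hSper m0]
    have hDm0 : D m0 = s j - t j := by
      show s ((m0 : ℕ) : ZMod n) - t ((m0 : ℕ) : ZMod n) = s j - t j
      rw [hj]
    have h6 : S (m0 + 1 + 0) - S m0 = D m0 := by simp [hS, Finset.sum_range_succ]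
    rw [show m0 + 1 + 0 = m0 + 1 by omega] at h6 ⊢
    linarith [hDm0, h6]
  · -- r ≥ 1
    have hr' : (j - 1 - (m0 : ZMod n)).val = r - 1 := by
      have hr1 : ((r : ℕ) : ZMod n) = ((r - 1 : ℕ) : ZMod n) + 1 := by
        rw [show ((r - 1 : ℕ) : ZMod n) + 1 = (((r - 1) + 1 : ℕ) : ZMod n) by push_cast; ring,
          show (r - 1) + 1 = r by omega]
      have heq : j - 1 - (m0 : ZMod n) = ((r - 1 : ℕ) : ZMod n) := by
        have h7 : j - 1 - (m0 : ZMod n) = (j - (m0 : ZMod n)) - 1 := by ring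
        rw [h7, ← hx, hr1]; ring
      rw [heq, ZMod.val_natCast_of_lt (by omega)]
    rw [hr', show m0 + 1 + (r - 1) = m0 + r by omega]
    have h5 : S (m0 + 1 + r) - S (m0 + r) = D (m0 + r) := by
      rw [show m0 + 1 + r = (m0 + r) + 1 by omega]; simp [hS, Finset.sum_range_succ]
    have hDj : D (m0 + r) = s j - t j := by
      show s ((m0 + r : ℕ) : ZMod n) - t ((m0 + r : ℕ) : ZMod n) = s j - t j
      rw [hcast]
    linarith [h5, hDj]
end
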